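/- arXiv:2308.11508 — 4 statements merged into one kernel-verified Lean document; each statement's English description precedes it below -/
import Mathlib

section
/- For every q ∈ ℕ, ∫_{2^q}^{2^{q+1}} cos(2^{-q}πξ)/√(1+ξ²) dξ ≤ 0. -/
open Real

/-- Oscillatory integral estimate for the ill-posedness proof:
`∫_{2^q}^{2^{q+1}} cos(2^{-q}πξ)/√(1+ξ²) dξ ≤ 0` for every `q ∈ ℕ`. -/
theorem oscillatory_dyadic_integral_nonpos (q : ℕ) :
    (∫ ξ in ((2 : ℝ) ^ q)..(2 : ℝ) ^ (q + 1),
      Real.cos (Real.pi * ξ / 2 ^ q) / Real.sqrt (1 + ξ ^ 2)) ≤ 0 := by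
  have hc0 : (0:ℝ) < 2 ^ q := by positivity
  set c : ℝ := 2 ^ q with hc
  set f : ℝ → ℝ := fun ξ => Real.cos (Real.pi * ξ / c) / Real.sqrt (1 + ξ ^ 2) with hf
  have hcont : Continuous f := by
    apply Continuous.div
    · continuity
    · continuity
    · intro x
      have h1 : (0:ℝ) < 1 + x ^ 2 := by positivity
      have := Real.sqrt_pos.mpr h1
      exact ne_of_gt this
  have hint : ∀ a b : ℝ, IntervalIntegrable f MeasureTheory.volume a b :=
    fun a b => hcont.intervalIntegrable a b
  have hb : (2:ℝ) ^ (q+1) = 2 * c := by rw [hc]; ring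
  rw [hb]
  have hsplit : (∫ ξ in c..(2*c), f ξ) =
      (∫ ξ in c..(3/2*c), f ξ) + ∫ ξ in (3/2*c)..(2*c), f ξ :=
    (intervalIntegral.integral_add_adjacent_intervals (hint _ _) (hint _ _)).symm
  have hrefl : (∫ ξ in (3/2*c)..(2*c), f ξ) = ∫ u in c..(3/2*c), f (3*c - u) := by
    rw [intervalIntegral.integral_comp_sub_left f (3*c)]
    congr 1 <;> ring
  have hint2 : IntervalIntegrable (fun u => f (3*c - u)) MeasureTheory.volume c (3/2*c) :=
    (hcont.comp (by continuity)).intervalIntegrable _ _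
  have hcomb : (∫ ξ in c..(2*c), f ξ) =
      ∫ u in c..(3/2*c), (f u + f (3*c - u)) := by
    rw [hsplit, hrefl, intervalIntegral.integral_add (hint _ _) hint2]
  rw [hcomb]
  have hnn : 0 ≤ ∫ u in c..(3/2*c), -(f u + f (3*c - u)) := by
    apply intervalIntegral.integral_nonneg (by linarith : c ≤ 3/2*c)
    intro u hu
    obtain ⟨hu1, hu2⟩ := hu
    rw [neg_nonneg]
    have hA : (0:ℝ) < Real.sqrt (1 + u ^ 2) := Real.sqrt_pos.mpr (by positivity)
    have hB : (0:ℝ) < Real.sqrt (1 + (3*c - u) ^ 2) := Real.sqrt_pos.mpr (by positivity)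
    have hu0 : 0 < u := lt_of_lt_of_le hc0 hu1
    have hle : u ≤ 3*c - u := by linarith
    have hAB : Real.sqrt (1 + u ^ 2) ≤ Real.sqrt (1 + (3*c - u) ^ 2) := by
      apply Real.sqrt_le_sqrt
      nlinarith
    have hcosneg : Real.cos (Real.pi * u / c) ≤ 0 := by
      apply Real.cos_nonpos_of_pi_div_two_le_of_le
      · have h1 : Real.pi ≤ Real.pi * u / c := by
          rw [le_div_iff₀ hc0]
          nlinarith [Real.pi_pos]
        linarith [Real.pi_pos]
      · rw [div_le_iff₀ hc0]
        nlinarith [Real.pi_pos]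
    have harg : Real.pi * (3*c - u) / c = Real.pi - Real.pi * u / c + 2 * Real.pi := by
      field_simp
      ring
    have hcos2 : Real.cos (Real.pi * (3*c - u) / c) = - Real.cos (Real.pi * u / c) := by
      rw [harg, Real.cos_add_two_pi, Real.cos_pi_sub]
    show f u + f (3*c - u) ≤ 0
    simp only [hf]
    rw [hcos2]
    have key : Real.cos (Real.pi * u / c) / Real.sqrt (1 + u ^ 2) ≤
        Real.cos (Real.pi * u / c) / Real.sqrt (1 + (3*c - u) ^ 2) := by
      rw [div_le_div_iff₀ hA hB]
      exact mul_le_mul_of_nonpos_left hAB hcosneg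
    have hneg : - Real.cos (Real.pi * u / c) / Real.sqrt (1 + (3*c - u) ^ 2) =
        - (Real.cos (Real.pi * u / c) / Real.sqrt (1 + (3*c - u) ^ 2)) := by ring
    rw [hneg]
    linarith
  rw [intervalIntegral.integral_neg] at hnn
  linarith
end

section
/- Let u : ℝ → ℝ be continuously differentiable with u, u' square-integrable against e^{-ξ} on [x,∞) and e^{-ξ}u(ξ)² → 0 as ξ → ∞. Then for every x ∈ ℝ, e^{x} ∫_x^{∞} e^{-ξ} (2u(ξ)² + u'(ξ)²) dξ ≥ u(x)². -/
open MeasureTheory Set Filter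

/-- Weighted integral inequality: if `u` is `C¹`, `e^{-ξ}u²` and `e^{-ξ}u'²` are
integrable on `[x,∞)` and `e^{-ξ}u(ξ)² → 0` as `ξ → ∞`, then
`e^x ∫_x^∞ e^{-ξ}(2u² + u'²) dξ ≥ u(x)²`. -/
theorem weighted_integral_lower_bound (u u' : ℝ → ℝ)
    (hderiv : ∀ x, HasDerivAt u (u' x) x)
    (hcont : Continuous u')
    (hint₁ : ∀ x, IntegrableOn (fun ξ => Real.exp (-ξ) * u ξ ^ 2) (Ici x))
    (hint₂ : ∀ x, IntegrableOn (fun ξ => Real.exp (-ξ) * u' ξ ^ 2) (Ici x))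
    (hlim : Tendsto (fun ξ => Real.exp (-ξ) * u ξ ^ 2) atTop (nhds 0)) :
    ∀ x : ℝ, u x ^ 2 ≤
      Real.exp x * ∫ ξ in Ici x, Real.exp (-ξ) * (2 * u ξ ^ 2 + u' ξ ^ 2) := by
  intro x
  have hu : Continuous u := continuous_iff_continuousAt.2 fun s => (hderiv s).continuousAt
  -- derivative of F ξ = e^{-ξ} u ξ ^ 2
  have hF' : ∀ ξ : ℝ, HasDerivAt (fun y => Real.exp (-y) * u y ^ 2)
      (Real.exp (-ξ) * (2 * u ξ * u' ξ - u ξ ^ 2)) ξ := by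
    intro ξ
    have h1 : HasDerivAt (fun y : ℝ => Real.exp (-y)) (-Real.exp (-ξ)) ξ := by
      simpa using (hasDerivAt_neg ξ).exp
    have h2 : HasDerivAt (fun y => u y ^ 2) (2 * u ξ ^ 1 * u' ξ) ξ := (hderiv ξ).pow 2
    have : HasDerivAt (fun y => Real.exp (-y) * u y ^ 2) _ ξ := h1.mul h2
    convert this using 1
    ring
  -- bounding function
  have hg : IntegrableOn (fun ξ => Real.exp (-ξ) * (2 * u ξ ^ 2 + u' ξ ^ 2)) (Ici x) := by
    have h := (((hint₁ x).const_mul 2).add (hint₂ x))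
    exact IntegrableOn.congr_fun h (fun ξ _ => by simp; ring) measurableSet_Ici
  have hgIoi : IntegrableOn (fun ξ => Real.exp (-ξ) * (2 * u ξ ^ 2 + u' ξ ^ 2)) (Ioi x) :=
    hg.mono_set Ioi_subset_Ici_self
  -- integrability of the derivative
  have hmeas : AEStronglyMeasurable (fun ξ => Real.exp (-ξ) * (2 * u ξ * u' ξ - u ξ ^ 2))
      (volume.restrict (Ioi x)) := by
    exact ((Real.continuous_exp.comp continuous_neg).mul
      (((continuous_const.mul hu).mul hcont).sub (hu.pow 2))).aestronglyMeasurable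
  have hDint : IntegrableOn (fun ξ => Real.exp (-ξ) * (2 * u ξ * u' ξ - u ξ ^ 2)) (Ioi x) := by
    refine hgIoi.mono' hmeas ?_
    filter_upwards with ξ
    have he := Real.exp_pos (-ξ)
    rw [Real.norm_eq_abs, abs_mul, abs_of_pos he]
    have : |2 * u ξ * u' ξ - u ξ ^ 2| ≤ 2 * u ξ ^ 2 + u' ξ ^ 2 := by
      rw [abs_le]
      constructor <;> nlinarith [sq_nonneg (u ξ + u' ξ), sq_nonneg (u ξ - u' ξ)]
    nlinarith
  -- FTC
  have hftc : ∫ ξ in Ioi x, Real.exp (-ξ) * (2 * u ξ * u' ξ - u ξ ^ 2)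
      = 0 - Real.exp (-x) * u x ^ 2 :=
    integral_Ioi_of_hasDerivAt_of_tendsto' (fun ξ _ => hF' ξ) hDint hlim
  -- pointwise bound and monotone integral
  have hmono : ∫ ξ in Ioi x, -(Real.exp (-ξ) * (2 * u ξ * u' ξ - u ξ ^ 2))
      ≤ ∫ ξ in Ioi x, Real.exp (-ξ) * (2 * u ξ ^ 2 + u' ξ ^ 2) := by
    refine setIntegral_mono_on hDint.neg hgIoi measurableSet_Ioi ?_
    intro ξ _
    have he := Real.exp_pos (-ξ)
    nlinarith [sq_nonneg (u ξ + u' ξ)]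
  have key : Real.exp (-x) * u x ^ 2
      ≤ ∫ ξ in Ioi x, Real.exp (-ξ) * (2 * u ξ ^ 2 + u' ξ ^ 2) := by
    have : ∫ ξ in Ioi x, -(Real.exp (-ξ) * (2 * u ξ * u' ξ - u ξ ^ 2))
        = Real.exp (-x) * u x ^ 2 := by
      rw [integral_neg, hftc]; ring
    linarith [hmono, this.ge]
  have hIci : (∫ ξ in Ici x, Real.exp (-ξ) * (2 * u ξ ^ 2 + u' ξ ^ 2))
      = ∫ ξ in Ioi x, Real.exp (-ξ) * (2 * u ξ ^ 2 + u' ξ ^ 2) :=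
    integral_Ici_eq_integral_Ioi
  rw [hIci]
  calc u x ^ 2 = Real.exp x * (Real.exp (-x) * u x ^ 2) := by
        rw [← mul_assoc, ← Real.exp_add]; simp
    _ ≤ _ := by
        exact mul_le_mul_of_nonneg_left key (Real.exp_pos x).le
end

section
/- Suppose q(x,t) solves q_t = u(q,t), q(x,0) = x with u smooth, and m solves m_t + mu + (mu)_x = 0. Then d/dt [e^{q(x,t)} m(q(x,t),t) q_x(x,t)] = 0, and hence e^{q(x,t)} m(q(x,t),t) q_x(x,t) = e^x m(x,0) for all t in the existence interval. -/
/-- Flow-conjugation identity for the CH-type equation `m_t + mu + (mu)_x = 0`: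
along the flow `q_t = u(q,t)`, `q(x,0) = x`, with `q_x` satisfying
`(q_x)_t = u_x(q,t) q_x`, `q_x(x,0) = 1`, the quantity `e^{q} m(q,t) q_x` has zero
time derivative and hence equals `e^x m(x,0)` for all `t`. -/
theorem flow_conjugation_identity
    (u m q : ℝ → ℝ → ℝ)            -- first argument: space, second: time
    (mt mx ux qx : ℝ → ℝ → ℝ)
    -- the PDE `m_t + m u + (m u)_x = 0`
    (hPDE : ∀ x t, mt x t + m x t * u x t + (mx x t * u x t + m x t * ux x t) = 0)
    -- `ux` is the spatial derivative of `u`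
    (hux : ∀ x t, HasDerivAt (fun y => u y t) (ux x t) x)
    -- the flow of `u`
    (hq : ∀ x t, HasDerivAt (fun s => q x s) (u (q x t) t) t)
    (hq0 : ∀ x, q x 0 = x)
    -- `qx` is the spatial derivative of `q`, with `(q_x)_t = u_x(q,t) q_x`
    (hqx : ∀ x t, HasDerivAt (fun y => q y t) (qx x t) x)
    (hqx0 : ∀ x, qx x 0 = 1)
    (hqxt : ∀ x t, HasDerivAt (fun s => qx x s) (ux (q x t) t * qx x t) t)
    -- chain rule for `m` along the flow (valid since `u`, `m` are smooth)
    (hchain : ∀ x t, HasDerivAt (fun s => m (q x s) s)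
        (mx (q x t) t * u (q x t) t + mt (q x t) t) t) :
    (∀ x t, HasDerivAt (fun s => Real.exp (q x s) * m (q x s) s * qx x s) 0 t) ∧
    (∀ x t, Real.exp (q x t) * m (q x t) t * qx x t = Real.exp x * m x 0) := by
  have key : ∀ x t, HasDerivAt (fun s => Real.exp (q x s) * m (q x s) s * qx x s) 0 t := by
    intro x t
    have h1 : HasDerivAt (fun s => Real.exp (q x s)) (Real.exp (q x t) * u (q x t) t) t :=
      (hq x t).exp
    have h3 := (h1.mul (hchain x t)).mul (hqxt x t)
    refine h3.congr_deriv ?_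
    have := hPDE (q x t) t
    simp only [Pi.mul_apply]
    linear_combination (Real.exp (q x t) * qx x t) * this
  refine ⟨key, fun x t => ?_⟩
  have hconst : ∀ s : ℝ, Real.exp (q x s) * m (q x s) s * qx x s
      = Real.exp (q x 0) * m (q x 0) 0 * qx x 0 := by
    intro s
    have hd : ∀ y, HasDerivAt (fun s => Real.exp (q x s) * m (q x s) s * qx x s) 0 y :=
      fun y => key x y
    have := is_const_of_deriv_eq_zero (f := fun s => Real.exp (q x s) * m (q x s) s * qx x s)
      (fun y => (hd y).differentiableAt) (fun y => (hd y).deriv) s 0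
    exact this
  rw [hconst t, hq0 x, hqx0 x, mul_one]
end

section
/- Let u₀ ∈ B^s_{p,r} with s > max{1+1/p, 3/2}, 1 ≤ p,r ≤ ∞, let C > 0 and T > 0 satisfy 2C‖u₀‖_{B^s_{p,r}} T < 1, and suppose a sequence (u⁽ⁿ⁾) satisfies u⁽⁰⁾ = 0 and the a priori bound ‖u⁽ⁿ⁺¹⁾(t)‖ ≤ exp(C∫₀ᵗ‖u⁽ⁿ⁾(τ)‖dτ)·(‖u₀‖ + C∫₀ᵗ exp(-C∫₀^τ‖u⁽ⁿ⁾(s)‖ds)‖u⁽ⁿ⁾(τ)‖² dτ) where ‖·‖ = ‖·‖_{B^s_{p,r}}. Then for all n and t ∈ [0,T], ‖u⁽ⁿ⁾(t)‖_{B^s_{p,r}} ≤ ‖u₀‖_{B^s_{p,r}} / (1 - 2C‖u₀‖_{B^s_{p,r}} t). -/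
open Set intervalIntegral

private lemma exp_half_log {y : ℝ} (hy : 0 < y) :
    Real.exp (Real.log y / 2) = Real.sqrt y := by
  rw [← Real.log_sqrt hy.le, Real.exp_log (Real.sqrt_pos.2 hy)]

/-- Inductive uniform bound on the Friedrichs approximation sequence: if
`a n t = ‖u⁽ⁿ⁾(t)‖_{B^s_{p,r}}` satisfies `a 0 = 0` and the a priori estimate
`a (n+1) t ≤ exp(C∫₀ᵗ a n)(A + C∫₀ᵗ exp(-C∫₀^τ a n)(a n τ)² dτ)` with
`A = ‖u₀‖_{B^s_{p,r}}` and `2CAT < 1`, then `a n t ≤ A/(1 - 2CAt)` on `[0,T]`. -/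
theorem friedrichs_uniform_bound (C T A : ℝ) (hC : 0 < C) (hT : 0 < T)
    (hA : 0 ≤ A) (hsmall : 2 * C * A * T < 1)
    (a : ℕ → ℝ → ℝ)
    (hcont : ∀ n, ContinuousOn (a n) (Icc 0 T))
    (hnn : ∀ n t, 0 ≤ a n t)
    (h0 : ∀ t, a 0 t = 0)
    (hrec : ∀ n, ∀ t ∈ Icc (0 : ℝ) T,
      a (n + 1) t ≤ Real.exp (C * ∫ τ in (0 : ℝ)..t, a n τ) *
        (A + C * ∫ τ in (0 : ℝ)..t,
          Real.exp (-(C * ∫ s in (0 : ℝ)..τ, a n s)) * (a n τ) ^ 2)) :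
    ∀ n, ∀ t ∈ Icc (0 : ℝ) T, a n t ≤ A / (1 - 2 * C * A * t) := by
  rcases eq_or_lt_of_le hA with hA0 | hApos
  · -- trivial case A = 0
    subst hA0
    have key : ∀ n, ∀ t ∈ Icc (0 : ℝ) T, a n t = 0 := by
      intro n
      induction n with
      | zero => intro t _; exact h0 t
      | succ n IH =>
        intro t ht
        refine le_antisymm ?_ (hnn _ t)
        have h1 := hrec n t ht
        have h2 : (∫ τ in (0:ℝ)..t, Real.exp (-(C * ∫ s in (0:ℝ)..τ, a n s)) * (a n τ) ^ 2)
            = 0 := by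
          have : (∫ τ in (0:ℝ)..t, Real.exp (-(C * ∫ s in (0:ℝ)..τ, a n s)) * (a n τ) ^ 2)
              = ∫ τ in (0:ℝ)..t, (0:ℝ) := by
            apply intervalIntegral.integral_congr
            intro τ hτ
            rw [uIcc_of_le ht.1] at hτ
            have hz : a n τ = 0 := IH τ ⟨hτ.1, hτ.2.trans ht.2⟩
            simp [hz]
          simpa using this
        rw [h2] at h1
        simpa using h1
    intro n t ht
    rw [key n t ht]
    simp
  · -- main case A > 0
    set b := 2 * C * A with hbdef
    have hb : 0 < b := by positivity
    have hyT : ∀ t ∈ Icc (0:ℝ) T, 0 < 1 - b * t := by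
      intro t ht
      have h1 : b * t ≤ b * T := by nlinarith [ht.2]
      nlinarith
    set g : ℝ → ℝ := fun τ => A / (1 - b * τ) with hgdef
    have hg_cont : ContinuousOn g (Icc 0 T) := by
      apply ContinuousOn.div continuousOn_const
      · fun_prop
      · exact fun τ hτ => (hyT τ hτ).ne'
    have hg_nonneg : ∀ τ ∈ Icc (0:ℝ) T, 0 ≤ g τ :=
      fun τ hτ => div_nonneg hA (hyT τ hτ).le
    set G : ℝ → ℝ := fun τ => -(Real.log (1 - b * τ)) / (2 * C) with hGdef
    have hG0 : G 0 = 0 := by simp [hGdef]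
    have hlin : ∀ τ : ℝ, HasDerivAt (fun x => 1 - b * x) (-b) τ := by
      intro τ
      simpa using ((hasDerivAt_id τ).const_mul b).const_sub 1
    have hG_deriv : ∀ τ ∈ Icc (0:ℝ) T, HasDerivAt G (g τ) τ := by
      intro τ hτ
      have hy := hyT τ hτ
      have h2 : HasDerivAt (fun x => Real.log (1 - b * x)) ((1 - b * τ)⁻¹ * (-b)) τ :=
        by have := (Real.hasDerivAt_log hy.ne').comp τ (hlin τ); exact this
      have h3 := (h2.neg).div_const (2 * C)
      refine h3.congr_deriv ?_
      rw [hgdef, hbdef]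
      simp only []
      field_simp
    -- interval integrability helpers
    have hsub : ∀ {x y : ℝ}, x ∈ Icc (0:ℝ) T → y ∈ Icc (0:ℝ) T → uIcc x y ⊆ Icc (0:ℝ) T := by
      intro x y hx hy
      rw [uIcc]
      exact Icc_subset_Icc (le_min hx.1 hy.1) (max_le hx.2 hy.2)
    have hint_a : ∀ n, ∀ {x y : ℝ}, x ∈ Icc (0:ℝ) T → y ∈ Icc (0:ℝ) T →
        IntervalIntegrable (a n) MeasureTheory.volume x y := by
      intro n x y hx hy
      exact ((hcont n).mono (hsub hx hy)).intervalIntegrable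
    have hint_g : ∀ {x y : ℝ}, x ∈ Icc (0:ℝ) T → y ∈ Icc (0:ℝ) T →
        IntervalIntegrable g MeasureTheory.volume x y := by
      intro x y hx hy
      exact (hg_cont.mono (hsub hx hy)).intervalIntegrable
    intro n
    induction n with
    | zero =>
      intro t ht
      rw [h0]
      exact div_nonneg hA (hyT t ht).le
    | succ n IH =>
      intro t ht
      obtain ⟨ht0, htT⟩ := ht
      have htmem : t ∈ Icc (0:ℝ) T := ⟨ht0, htT⟩
      have hyt : 0 < 1 - b * t := hyT t htmem
      set st := Real.sqrt (1 - b * t) with hstdef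
      have hst : 0 < st := Real.sqrt_pos.2 hyt
      have hstsq : st * st = 1 - b * t := Real.mul_self_sqrt hyt.le
      set I : ℝ → ℝ := fun x => ∫ s in (0:ℝ)..x, a n s with hIdef
      have hIccsub : Icc (0:ℝ) t ⊆ Icc (0:ℝ) T := Icc_subset_Icc le_rfl htT
      -- integral comparison on subintervals
      have hseg : ∀ τ ∈ Icc (0:ℝ) t, I t - I τ ≤ G t - G τ := by
        intro τ hτ
        have hτT : τ ∈ Icc (0:ℝ) T := hIccsub hτ
        have e1 : I t - I τ = ∫ s in τ..t, a n s :=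
          intervalIntegral.integral_interval_sub_left
            (hint_a n (left_mem_Icc.2 hT.le) htmem) (hint_a n (left_mem_Icc.2 hT.le) hτT)
        have e2 : (∫ s in τ..t, a n s) ≤ ∫ s in τ..t, g s := by
          apply intervalIntegral.integral_mono_on hτ.2 (hint_a n hτT htmem) (hint_g hτT htmem)
          intro s hs
          exact IH s ⟨le_trans hτ.1 hs.1, le_trans hs.2 htT⟩
        have e3 : (∫ s in τ..t, g s) = G t - G τ := by
          apply intervalIntegral.integral_eq_sub_of_hasDerivAt
          · intro s hs
            rw [uIcc_of_le hτ.2] at hs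
            exact hG_deriv s ⟨le_trans hτ.1 hs.1, le_trans hs.2 htT⟩
          · exact hint_g hτT htmem
        rw [e1, ← e3]; exact e2
      have hGt : Real.exp (C * G t) = st⁻¹ := by
        have : C * G t = -(Real.log (1 - b * t) / 2) := by
          rw [hGdef]; field_simp
        rw [this, Real.exp_neg, exp_half_log hyt]
      have hexp_sub : ∀ τ ∈ Icc (0:ℝ) t,
          Real.exp (C * (G t - G τ)) = Real.sqrt (1 - b * τ) / st := by
        intro τ hτ
        have hyτ : 0 < 1 - b * τ := hyT τ (hIccsub hτ)
        have : C * (G t - G τ) = Real.log (1 - b * τ) / 2 - Real.log (1 - b * t) / 2 := by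
          rw [hGdef]; field_simp; ring
        rw [this, Real.exp_sub, exp_half_log hyτ, exp_half_log hyt]
      -- continuity of primitive I on [0, t]
      have hI_cont : ContinuousOn I (Icc 0 t) := by
        have := intervalIntegral.continuousOn_primitive_interval'
          (hint_a n (left_mem_Icc.2 hT.le) htmem) (left_mem_uIcc (a := (0:ℝ)) (b := t))
        rwa [uIcc_of_le ht0] at this
      -- the two integrands
      set f : ℝ → ℝ := fun τ => Real.exp (C * I t) * (Real.exp (-(C * I τ)) * (a n τ) ^ 2)
        with hfdef
      set ψ : ℝ → ℝ := fun τ => Real.sqrt (1 - b * τ) / st * (g τ) ^ 2 with hψdef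
      have hf_cont : ContinuousOn f (Icc 0 t) := by
        apply ContinuousOn.mul continuousOn_const
        apply ContinuousOn.mul
        · exact (Real.continuous_exp.comp_continuousOn ((hI_cont.const_smul C).neg))
        · exact (((hcont n).mono hIccsub).pow 2)
      have hψ_cont : ContinuousOn ψ (Icc 0 t) := by
        apply ContinuousOn.mul
        · apply ContinuousOn.div _ continuousOn_const (fun x _ => hst.ne')
          exact (Real.continuous_sqrt.comp_continuousOn (by fun_prop))
        · exact ((hg_cont.mono hIccsub).pow 2)
      have hfψ : ∀ τ ∈ Icc (0:ℝ) t, f τ ≤ ψ τ := by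
        intro τ hτ
        have hτT : τ ∈ Icc (0:ℝ) T := hIccsub hτ
        have e1 : f τ = Real.exp (C * (I t - I τ)) * (a n τ) ^ 2 := by
          simp only [hfdef, ← mul_assoc, ← Real.exp_add]
          ring_nf
        rw [e1]
        show _ ≤ Real.sqrt (1 - b * τ) / st * (g τ) ^ 2
        rw [← hexp_sub τ hτ]
        apply mul_le_mul
        · exact Real.exp_le_exp.2 (by nlinarith [hseg τ hτ])
        · exact pow_le_pow_left₀ (hnn n τ) (IH τ hτT) 2
        · positivity
        · positivity
      have hint_f : IntervalIntegrable f MeasureTheory.volume 0 t := by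
        apply ContinuousOn.intervalIntegrable
        rwa [uIcc_of_le ht0]
      have hint_ψ : IntervalIntegrable ψ MeasureTheory.volume 0 t := by
        apply ContinuousOn.intervalIntegrable
        rwa [uIcc_of_le ht0]
      -- FTC computation of ∫ ψ
      have hψ_val : (∫ τ in (0:ℝ)..t, ψ τ)
          = A ^ 2 / st * (2 / b) * st⁻¹ - A ^ 2 / st * (2 / b) := by
        have hH : ∀ τ ∈ uIcc (0:ℝ) t,
            HasDerivAt (fun x => A ^ 2 / st * (2 / b) * (Real.sqrt (1 - b * x))⁻¹) (ψ τ) τ := by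
          intro τ hτ
          rw [uIcc_of_le ht0] at hτ
          have hyτ : 0 < 1 - b * τ := hyT τ (hIccsub hτ)
          have hsτ : 0 < Real.sqrt (1 - b * τ) := Real.sqrt_pos.2 hyτ
          have h1 : HasDerivAt (fun x => Real.sqrt (1 - b * x))
              (-b / (2 * Real.sqrt (1 - b * τ))) τ := (hlin τ).sqrt hyτ.ne'
          have h2 := (h1.inv hsτ.ne').const_mul (A ^ 2 / st * (2 / b))
          refine h2.congr_deriv ?_
          rw [hψdef, hgdef]
          have hss : Real.sqrt (1 - b * τ) * Real.sqrt (1 - b * τ) = 1 - b * τ :=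
            Real.mul_self_sqrt hyτ.le
          simp only []
          rw [show A / (1 - b * τ) = A / (Real.sqrt (1 - b * τ) * Real.sqrt (1 - b * τ)) by rw [hss]]
          field_simp
        have := intervalIntegral.integral_eq_sub_of_hasDerivAt hH hint_ψ
        rw [this]
        simp [Real.sqrt_one]
        exact Or.inl hstdef.symm
      -- putting things together
      have hmain := hrec n t htmem
      have hsplit : Real.exp (C * I t) *
            (A + C * ∫ τ in (0:ℝ)..t, Real.exp (-(C * I τ)) * (a n τ) ^ 2)
          = A * Real.exp (C * I t) + C * ∫ τ in (0:ℝ)..t, f τ := by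
        rw [hfdef]
        rw [intervalIntegral.integral_const_mul]
        ring
      have hImono : ∫ τ in (0:ℝ)..t, f τ ≤ ∫ τ in (0:ℝ)..t, ψ τ :=
        intervalIntegral.integral_mono_on ht0 hint_f hint_ψ hfψ
      have hIt_le : I t ≤ G t := by
        have := hseg 0 (left_mem_Icc.2 ht0)
        simpa [hIdef, hG0] using this
      have hexp_le : Real.exp (C * I t) ≤ st⁻¹ := by
        rw [← hGt]
        exact Real.exp_le_exp.2 (by nlinarith)
      calc a (n + 1) t ≤ Real.exp (C * I t) *
            (A + C * ∫ τ in (0:ℝ)..t, Real.exp (-(C * I τ)) * (a n τ) ^ 2) := hmain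
        _ = A * Real.exp (C * I t) + C * ∫ τ in (0:ℝ)..t, f τ := hsplit
        _ ≤ A * st⁻¹ + C * ∫ τ in (0:ℝ)..t, ψ τ := by
            gcongr
        _ = A / (1 - b * t) := by
            rw [hψ_val, ← hstsq]
            have e : C * (A ^ 2 / st * (2 / b) * st⁻¹ - A ^ 2 / st * (2 / b))
                = A / (st * st) - A / st := by
              rw [hbdef]
              field_simp
            rw [mul_sub] at e ⊢
            rw [e]
            field_simp
            ring
end
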